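/- With the notation of the cable nonlinearity (I = (0,π), s ∈ C¹, ξ₀, Ξ, L, L₀, h as above, b, c ≥ 0, and Π(u) = (b/2)(L(u)−L₀)² + c∫₀^π ξ₀(Ξ(u)−ξ₀)), there exist constants C_c = b(π + ∫₀^π|s'|) and C̄_c = c·max_{Ī}|ξ₀|·(π + ∫₀^π|s'|) + b L₀² such that for all u ∈ W^{1,1}(I): ∫₀^π h(u)(x) u'(x) dx ≤ −Π(u) + C_c ∫₀^π |u'(x)| dx + C̄_c. -/

import Mathlib

open MeasureTheory

/-- The rest arclength density `ξ₀(x) = √(1+s'(x)²)`. -/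
noncomputable def xi0 (ds : ℝ → ℝ) (x : ℝ) : ℝ := Real.sqrt (1 + (ds x) ^ 2)

/-- The arclength integrand `Ξ(u)(x) = √(1+(u'(x)+s'(x))²)`. -/
noncomputable def XiF (ds du : ℝ → ℝ) (x : ℝ) : ℝ :=
  Real.sqrt (1 + (du x + ds x) ^ 2)

/-- The length functional `L(u) = ∫₀^π Ξ(u)`. -/
noncomputable def lenF (ds du : ℝ → ℝ) : ℝ :=
  ∫ x in (0:ℝ)..Real.pi, XiF ds du x

/-- The rest length `L₀ = ∫₀^π ξ₀ = L(0)`. -/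
noncomputable def len0 (ds : ℝ → ℝ) : ℝ :=
  ∫ x in (0:ℝ)..Real.pi, xi0 ds x

/-- The cable-hanger restoring force density
`h(u) = [b(L₀ − L(u)) − cξ₀]·(u'+s')/√(1+(u'+s')²)`. -/
noncomputable def hF (b c : ℝ) (ds du : ℝ → ℝ) (x : ℝ) : ℝ :=
  (b * (len0 ds - lenF ds du) - c * xi0 ds x) * (du x + ds x) / XiF ds du x

/-- The cable potential energy
`Π(u) = (b/2)(L(u)−L₀)² + c∫₀^π ξ₀(Ξ(u)−ξ₀)`. -/
noncomputable def PiF (b c : ℝ) (ds du : ℝ → ℝ) : ℝ :=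
  b / 2 * (lenF ds du - len0 ds) ^ 2 +
    c * ∫ x in (0:ℝ)..Real.pi, xi0 ds x * (XiF ds du x - xi0 ds x)

open Real Set intervalIntegral

/-!
Write `X = Ξ(u)`, `ξ = ξ₀` and `k = b(L₀ − L(u)) − cξ`. Since
`(u' + s')u' = X² − (1 + (u' + s')s')`, we have `h(u)u' = kX − k(1 + (u' + s')s')/X`, and the
last term is at most `|k|(1 + |s'|)` because `|u' + s'| ≤ X` and `1 ≤ X`. Integrating,
`∫ kX = b(L₀ − L)L − c∫ξ(X − ξ) − c∫ξ²`; the last integral is dropped, and `b(L₀ − L)L` is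
absorbed by `−(b/2)(L − L₀)² + bL₀²`. Finally `|k| ≤ b|L − L₀| + cM`, and `|L − L₀| ≤ ∫|u'|`
because `t ↦ √(1 + t²)` is `1`-Lipschitz.
-/

lemma one_le_sqrt_one_add_sq (a : ℝ) : 1 ≤ √(1 + a ^ 2) :=
  Real.one_le_sqrt.2 (by nlinarith [sq_nonneg a])

lemma abs_le_sqrt_one_add_sq (a : ℝ) : |a| ≤ √(1 + a ^ 2) := by
  rw [← Real.sqrt_sq_eq_abs]
  exact Real.sqrt_le_sqrt (by linarith)

/-- `√(1 + t²) = ‖1 + t i‖` in `ℂ`. -/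
lemma abs_sqrt_one_add_sq_sub_sqrt_one_add_sq_le (x y : ℝ) :
    |√(1 + x ^ 2) - √(1 + y ^ 2)| ≤ |x - y| := by
  have h := abs_norm_sub_norm_le ((1 : ℝ) + x * Complex.I : ℂ) ((1 : ℝ) + y * Complex.I)
  rwa [Complex.norm_add_mul_I, Complex.norm_add_mul_I, add_sub_add_left_eq_sub, ← sub_mul,
    norm_mul, Complex.norm_I, mul_one, ← Complex.ofReal_sub, Complex.norm_real, one_pow,
    Real.norm_eq_abs] at h

lemma sqrt_one_add_sq_le_one_add_abs (a : ℝ) : √(1 + a ^ 2) ≤ 1 + |a| := by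
  have h := abs_sqrt_one_add_sq_sub_sqrt_one_add_sq_le a 0
  rw [zero_pow two_ne_zero, add_zero, Real.sqrt_one, sub_zero] at h
  linarith [le_abs_self (√(1 + a ^ 2) - 1)]

lemma abs_mul_div_sqrt_one_add_sq_le (k t : ℝ) : |k * t / √(1 + t ^ 2)| ≤ |k| := by
  have hX : 0 < √(1 + t ^ 2) := by positivity
  rw [abs_div, abs_mul, abs_of_pos hX, div_le_iff₀ hX]
  exact mul_le_mul_of_nonneg_left (abs_le_sqrt_one_add_sq t) (abs_nonneg k)

lemma mul_div_sqrt_one_add_sq_mul_le (k p q : ℝ) :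
    k * (p + q) / √(1 + (p + q) ^ 2) * p ≤ k * √(1 + (p + q) ^ 2) + |k| * (1 + |q|) := by
  set X := √(1 + (p + q) ^ 2)
  have hX : 0 < X := by positivity
  have hX2 : X ^ 2 = 1 + (p + q) ^ 2 := Real.sq_sqrt (by positivity)
  have hsplit : k * (p + q) / X * p = k * X - k * (1 + (p + q) * q) / X := by
    field_simp
    linear_combination (-k) * hX2
  have hnum : |1 + (p + q) * q| ≤ X * (1 + |q|) :=
    calc |1 + (p + q) * q| ≤ 1 + |p + q| * |q| := by
          simpa only [abs_one, abs_mul] using abs_add_le 1 ((p + q) * q)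
      _ ≤ X + X * |q| := by
          gcongr
          exacts [one_le_sqrt_one_add_sq _, abs_le_sqrt_one_add_sq _]
      _ = X * (1 + |q|) := by ring
  have hrem : -(k * (1 + (p + q) * q) / X) ≤ |k| * (1 + |q|) :=
    calc -(k * (1 + (p + q) * q) / X) ≤ |k| * (|1 + (p + q) * q| / X) := by
          rw [mul_div_assoc', ← abs_of_pos hX, ← abs_mul, ← abs_div, abs_of_pos hX]
          exact neg_le_abs _
      _ ≤ |k| * (1 + |q|) := by
          gcongr
          rw [div_le_iff₀ hX, mul_comm (1 + |q|)]
          exact hnum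
  linarith

lemma mul_sub_mul_le_neg_half_sq {b : ℝ} (hb : 0 ≤ b) (L L₀ : ℝ) :
    b * (L₀ - L) * L ≤ -(b / 2 * (L - L₀) ^ 2) + b * L₀ ^ 2 := by
  nlinarith [mul_nonneg hb (sq_nonneg L), mul_nonneg hb (sq_nonneg L₀)]

section Cable

variable {b c M a₁ a₂ : ℝ} {ds du : ℝ → ℝ}

lemma xi0_nonneg (x : ℝ) : 0 ≤ xi0 ds x := Real.sqrt_nonneg _

lemma XiF_nonneg (x : ℝ) : 0 ≤ XiF ds du x := Real.sqrt_nonneg _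

lemma abs_XiF_sub_xi0_le (x : ℝ) : |XiF ds du x - xi0 ds x| ≤ |du x| := by
  simpa only [XiF, xi0, add_sub_cancel_right] using
    abs_sqrt_one_add_sq_sub_sqrt_one_add_sq_le (du x + ds x) (ds x)

lemma abs_hF_coeff_le (hb : 0 ≤ b) (hc : 0 ≤ c) {x : ℝ} (hM : |xi0 ds x| ≤ M) :
    |b * (len0 ds - lenF ds du) - c * xi0 ds x| ≤ b * |lenF ds du - len0 ds| + c * M :=
  calc |b * (len0 ds - lenF ds du) - c * xi0 ds x|
      ≤ |b * (len0 ds - lenF ds du)| + |c * xi0 ds x| := abs_sub _ _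
    _ = b * |lenF ds du - len0 ds| + c * |xi0 ds x| := by
        rw [abs_mul, abs_mul, abs_of_nonneg hb, abs_of_nonneg hc, abs_sub_comm]
    _ ≤ b * |lenF ds du - len0 ds| + c * M := by gcongr

lemma abs_hF_le (hb : 0 ≤ b) (hc : 0 ≤ c) {x : ℝ} (hM : |xi0 ds x| ≤ M) :
    |hF b c ds du x| ≤ b * |lenF ds du - len0 ds| + c * M :=
  (abs_mul_div_sqrt_one_add_sq_le _ _).trans (abs_hF_coeff_le hb hc hM)

lemma hF_mul_le (hb : 0 ≤ b) (hc : 0 ≤ c) {x : ℝ} (hM : |xi0 ds x| ≤ M) :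
    hF b c ds du x * du x ≤ b * (len0 ds - lenF ds du) * XiF ds du x
      + (b * |lenF ds du - len0 ds| + c * M) * (1 + |ds x|)
      - c * (xi0 ds x * (XiF ds du x - xi0 ds x)) := by
  have h := mul_div_sqrt_one_add_sq_mul_le
    (b * (len0 ds - lenF ds du) - c * xi0 ds x) (du x) (ds x)
  have hk := mul_le_mul_of_nonneg_right (abs_hF_coeff_le (du := du) hb hc hM)
    (by positivity : (0 : ℝ) ≤ 1 + |ds x|)
  have hξ : 0 ≤ c * (xi0 ds x * xi0 ds x) := by have := xi0_nonneg (ds := ds) x; positivity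
  simp only [hF, XiF] at h ⊢
  linarith

lemma intervalIntegrable_xi0 (hds : IntervalIntegrable ds volume a₁ a₂) :
    IntervalIntegrable (xi0 ds) volume a₁ a₂ :=
  ((intervalIntegrable_const (c := 1)).add hds.abs).mono_fun'
    (by have := hds.def'.aestronglyMeasurable; unfold xi0; fun_prop)
    (ae_of_all _ fun x => by
      dsimp only
      rw [Real.norm_of_nonneg (xi0_nonneg x)]
      exact sqrt_one_add_sq_le_one_add_abs (ds x))

lemma intervalIntegrable_XiF (hds : IntervalIntegrable ds volume a₁ a₂)
    (hdu : IntervalIntegrable du volume a₁ a₂) : IntervalIntegrable (XiF ds du) volume a₁ a₂ :=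
  ((intervalIntegrable_xi0 hds).add hdu.abs).mono_fun'
    (by have := hds.def'.aestronglyMeasurable; have := hdu.def'.aestronglyMeasurable
        unfold XiF; fun_prop)
    (ae_of_all _ fun x => by
      dsimp only
      rw [Real.norm_of_nonneg (XiF_nonneg x)]
      linarith [(abs_le.1 (abs_XiF_sub_xi0_le (ds := ds) (du := du) x)).2])

lemma intervalIntegrable_xi0_mul_XiF_sub_xi0 (hds : IntervalIntegrable ds volume a₁ a₂)
    (hdu : IntervalIntegrable du volume a₁ a₂) (hM : ∀ x ∈ uIcc a₁ a₂, |xi0 ds x| ≤ M) :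
    IntervalIntegrable (fun x => xi0 ds x * (XiF ds du x - xi0 ds x)) volume a₁ a₂ :=
  (hdu.abs.const_mul M).mono_fun'
    ((intervalIntegrable_xi0 hds).def'.aestronglyMeasurable.mul
      ((intervalIntegrable_XiF hds hdu).sub (intervalIntegrable_xi0 hds)).def'.aestronglyMeasurable)
    (by
      filter_upwards [ae_restrict_mem measurableSet_uIoc] with x hx
      have hxM := hM x (uIoc_subset_uIcc hx)
      rw [norm_mul, Real.norm_eq_abs, Real.norm_eq_abs]
      exact mul_le_mul hxM (abs_XiF_sub_xi0_le x) (abs_nonneg _) ((abs_nonneg _).trans hxM))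

lemma intervalIntegrable_hF_mul (hb : 0 ≤ b) (hc : 0 ≤ c)
    (hds : IntervalIntegrable ds volume a₁ a₂) (hdu : IntervalIntegrable du volume a₁ a₂)
    (hM : ∀ x ∈ uIcc a₁ a₂, |xi0 ds x| ≤ M) :
    IntervalIntegrable (fun x => hF b c ds du x * du x) volume a₁ a₂ :=
  (hdu.abs.const_mul (b * |lenF ds du - len0 ds| + c * M)).mono_fun'
    (by
      have := hds.def'.aestronglyMeasurable.aemeasurable
      have := hdu.def'.aestronglyMeasurable.aemeasurable
      refine AEMeasurable.aestronglyMeasurable ?_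
      unfold hF XiF xi0
      fun_prop)
    (by
      filter_upwards [ae_restrict_mem measurableSet_uIoc] with x hx
      rw [norm_mul, Real.norm_eq_abs, Real.norm_eq_abs]
      exact mul_le_mul_of_nonneg_right (abs_hF_le hb hc (hM x (uIoc_subset_uIcc hx)))
        (abs_nonneg _))

lemma abs_lenF_sub_len0_le (hds : IntervalIntegrable ds volume 0 π)
    (hdu : IntervalIntegrable du volume 0 π) :
    |lenF ds du - len0 ds| ≤ ∫ x in (0 : ℝ)..π, |du x| := by
  have hX := intervalIntegrable_XiF hds hdu
  have hξ := intervalIntegrable_xi0 hds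
  calc |lenF ds du - len0 ds| = |∫ x in (0 : ℝ)..π, (XiF ds du x - xi0 ds x)| := by
        rw [integral_sub hX hξ, lenF, len0]
    _ ≤ ∫ x in (0 : ℝ)..π, |XiF ds du x - xi0 ds x| :=
        intervalIntegral.abs_integral_le_integral_abs pi_pos.le
    _ ≤ ∫ x in (0 : ℝ)..π, |du x| :=
        integral_mono_on pi_pos.le (hX.sub hξ).abs hdu.abs fun x _ => abs_XiF_sub_xi0_le x

lemma integral_hF_mul_le (hb : 0 ≤ b) (hc : 0 ≤ c) (hds : IntervalIntegrable ds volume 0 π)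
    (hdu : IntervalIntegrable du volume 0 π) (hM : ∀ x ∈ Icc 0 π, |xi0 ds x| ≤ M) :
    ∫ x in (0 : ℝ)..π, hF b c ds du x * du x ≤
      b * (len0 ds - lenF ds du) * lenF ds du
        + (b * |lenF ds du - len0 ds| + c * M) * (π + ∫ x in (0 : ℝ)..π, |ds x|)
        - c * ∫ x in (0 : ℝ)..π, xi0 ds x * (XiF ds du x - xi0 ds x) := by
  have hM' : ∀ x ∈ uIcc 0 π, |xi0 ds x| ≤ M := by rwa [uIcc_of_le pi_pos.le]
  have hX := (intervalIntegrable_XiF hds hdu).const_mul (b * (len0 ds - lenF ds du))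
  have hS := ((intervalIntegrable_const (c := 1)).add hds.abs).const_mul
    (b * |lenF ds du - len0 ds| + c * M)
  have hQ := (intervalIntegrable_xi0_mul_XiF_sub_xi0 hds hdu hM').const_mul c
  calc ∫ x in (0 : ℝ)..π, hF b c ds du x * du x
      ≤ ∫ x in (0 : ℝ)..π, (b * (len0 ds - lenF ds du) * XiF ds du x
          + (b * |lenF ds du - len0 ds| + c * M) * (1 + |ds x|)
          - c * (xi0 ds x * (XiF ds du x - xi0 ds x))) :=
        integral_mono_on pi_pos.le (intervalIntegrable_hF_mul hb hc hds hdu hM')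
          ((hX.add hS).sub hQ) fun x hx => hF_mul_le hb hc (hM x hx)
    _ = _ := by
        rw [integral_sub (hX.add hS) hQ, integral_add hX hS, intervalIntegral.integral_const_mul,
          intervalIntegral.integral_const_mul, intervalIntegral.integral_const_mul,
          integral_add intervalIntegrable_const hds.abs, intervalIntegral.integral_const,
          sub_zero, smul_eq_mul, mul_one]
        rfl

end Cable

theorem stmt_7_general (b c : ℝ) (hb : 0 ≤ b) (hc : 0 ≤ c)
    (ds du : ℝ → ℝ) (M : ℝ)
    (hsc : ContinuousOn ds (Set.Icc (0:ℝ) Real.pi))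
    (hM : ∀ x ∈ Set.Icc (0:ℝ) Real.pi, |xi0 ds x| ≤ M)
    (hui : IntervalIntegrable du volume 0 Real.pi) :
    (∫ x in (0:ℝ)..Real.pi, hF b c ds du x * du x) ≤
      -PiF b c ds du +
      (b * (Real.pi + ∫ x in (0:ℝ)..Real.pi, |ds x|)) *
        (∫ x in (0:ℝ)..Real.pi, |du x|) +
      (c * M * (Real.pi + ∫ x in (0:ℝ)..Real.pi, |ds x|) + b * (len0 ds) ^ 2) := by
  have hds : IntervalIntegrable ds volume 0 π := hsc.intervalIntegrable_of_Icc pi_pos.le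
  have hS : 0 ≤ π + ∫ x in (0 : ℝ)..π, |ds x| :=
    add_nonneg pi_pos.le (integral_nonneg pi_pos.le fun x _ => abs_nonneg _)
  have hL := mul_le_mul_of_nonneg_left (abs_lenF_sub_len0_le hds hui) (mul_nonneg hb hS)
  have hquad := mul_sub_mul_le_neg_half_sq hb (lenF ds du) (len0 ds)
  have hint := integral_hF_mul_le hb hc hds hui hM
  unfold PiF
  linarith

/-- The key dissipativity estimate on the cable nonlinearity:
`(h(u), u')₀ ≤ −Π(u) + C_c‖u'‖_{L¹} + C̄_c`, with
`C_c = b(π + ∫₀^π|s'|)` and `C̄_c = c·M·(π + ∫₀^π|s'|) + bL₀²`,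
`M` being a bound on `ξ₀` over `[0,π]`. -/
theorem stmt_7 (b c : ℝ) (hb : 0 ≤ b) (hc : 0 ≤ c)
    (s ds u du : ℝ → ℝ) (M : ℝ)
    (hs : ∀ x ∈ Set.Icc (0:ℝ) Real.pi, HasDerivAt s (ds x) x)
    (hsc : ContinuousOn ds (Set.Icc (0:ℝ) Real.pi))
    (hM : ∀ x ∈ Set.Icc (0:ℝ) Real.pi, |xi0 ds x| ≤ M)
    (hu : ∀ x ∈ Set.Ioo (0:ℝ) Real.pi, HasDerivAt u (du x) x)
    (hui : IntervalIntegrable du volume 0 Real.pi) :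
    (∫ x in (0:ℝ)..Real.pi, hF b c ds du x * du x) ≤
      -PiF b c ds du +
      (b * (Real.pi + ∫ x in (0:ℝ)..Real.pi, |ds x|)) *
        (∫ x in (0:ℝ)..Real.pi, |du x|) +
      (c * M * (Real.pi + ∫ x in (0:ℝ)..Real.pi, |ds x|) + b * (len0 ds) ^ 2) :=
  stmt_7_general b c hb hc ds du M hsc hM hui
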